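/- For the database D = {A(c), B(c)} and the query q = (∃x. A(x) ∧ B(x)) ∨ (∃x. ¬A(x) ∧ B(x)): the fact A(c) is not impact-relevant (for every D' ⊆ D, adding A(c) never changes the truth value of q on D'), yet {A(c), B(c)} is a minimal positive support containing A(c), so A(c) is positive-relevant. -/
import Mathlib


/-- Facts over the single constant c: `Af` is A(c), `Bf` is B(c). -/
inductive DBFact | Af | Bf
deriving DecidableEq

open DBFact

/-- The database D = {A(c), B(c)}. -/
def D : Set DBFact := {Af, Bf}

/-- `S` satisfies q = (∃x. A(x) ∧ B(x)) ∨ (∃x. ¬A(x) ∧ B(x)) (with the single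
constant c, the existential witness occurring in `S` forces B(c) ∈ S). -/
def Sat (S : Set DBFact) : Prop :=
  (Af ∈ S ∧ Bf ∈ S) ∨ (Af ∉ S ∧ Bf ∈ S)

/-- `α` is impact-relevant: adding it changes the truth value of q on some
sub-database. -/
def ImpactRelevant (α : DBFact) : Prop :=
  ∃ D' : Set DBFact, D' ⊆ D ∧ ¬ (Sat D' ↔ Sat (insert α D'))

/-- Positive supports of q in D: the positive atoms of a satisfied disjunct are
mapped into `S` and the negated atoms are false in all of `D`. -/
def PosSupport (S : Set DBFact) : Prop :=
  S ⊆ D ∧ ((Af ∈ S ∧ Bf ∈ S) ∨ (Bf ∈ S ∧ Af ∉ D))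

def MinPosSupport (S : Set DBFact) : Prop :=
  PosSupport S ∧ ∀ T : Set DBFact, T ⊂ S → ¬ PosSupport T

/-- A(c) is not impact-relevant, yet it is positive-relevant: {A(c), B(c)} is a
minimal positive support containing A(c). -/
theorem positive_relevant_not_impact_relevant :
    ¬ ImpactRelevant Af ∧ MinPosSupport {Af, Bf} ∧ Af ∈ ({Af, Bf} : Set DBFact) := by
  refine ⟨?_, ⟨⟨subset_rfl, Or.inl ⟨Or.inl rfl, Or.inr rfl⟩⟩, ?_⟩, Or.inl rfl⟩
  · rintro ⟨D', _, h⟩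
    apply h
    constructor
    · rintro (⟨hA, hB⟩ | ⟨hA, hB⟩)
      · exact Or.inl ⟨Set.mem_insert _ _, Set.mem_insert_of_mem _ hB⟩
      · exact Or.inl ⟨Set.mem_insert _ _, Set.mem_insert_of_mem _ hB⟩
    · rintro (⟨hA, hB⟩ | ⟨hA, hB⟩)
      · rcases hB with hB | hB
        · exact absurd hB (by simp)
        · by_cases hA' : Af ∈ D'
          · exact Or.inl ⟨hA', hB⟩
          · exact Or.inr ⟨hA', hB⟩
      · exact absurd (Set.mem_insert _ _) hA
  · rintro T hT ⟨hTD, (⟨hA, hB⟩ | ⟨hB, hAD⟩)⟩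
    · exact hT.2 (fun x hx => by rcases hx with rfl | rfl; exacts [hA, hB])
    · exact hAD (Or.inl rfl)
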